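/- Let S be a numerical semigroup with the Arf property, multiplicity m > 2 and Kunz coordinates (x_1, …, x_{m−1}). Then for every integer k with 0 < k < m/2, one has x_{2k} ≤ x_k and x_{m−2k} ≤ x_{m−k} + 1. -/

import Mathlib

/-- A numerical semigroup: a subset of ℕ containing 0, closed under addition,
with finite complement. -/
def IsNumericalSemigroup (S : Set ℕ) : Prop :=
  0 ∈ S ∧ (∀ a ∈ S, ∀ b ∈ S, a + b ∈ S) ∧ Sᶜ.Finite

/-- The Arf property: for all x ≥ y ≥ z in S, x + y - z ∈ S. -/
def HasArfProperty (S : Set ℕ) : Prop :=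
  ∀ x ∈ S, ∀ y ∈ S, ∀ z ∈ S, z ≤ y → y ≤ x → x + y - z ∈ S

/-- The conductor: the least c such that every n ≥ c lies in S. -/
noncomputable def conductorOf (S : Set ℕ) : ℕ := sInf {c | ∀ n, c ≤ n → n ∈ S}

/-- The Frobenius number: the largest natural number not in S. -/
noncomputable def frobeniusOf (S : Set ℕ) : ℕ := sSup {n | n ∉ S}

/-- The genus: the number of gaps of S. -/
noncomputable def genusOf (S : Set ℕ) : ℕ := Sᶜ.ncard

/-- The multiplicity: the least positive element of S. -/
noncomputable def multiplicityOf (S : Set ℕ) : ℕ := sInf {n | n ∈ S ∧ 0 < n}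

/-- w(i) = min { s ∈ S : s ≡ i (mod m) }. -/
noncomputable def aperyW (S : Set ℕ) (m i : ℕ) : ℕ := sInf {s | s ∈ S ∧ s % m = i}

/-- The cocycle h(i,j) = (w(i) + w(j) - w((i+j) mod m)) / m, as a rational number. -/
noncomputable def cocycle (S : Set ℕ) (m i j : ℕ) : ℚ :=
  ((aperyW S m i : ℚ) + (aperyW S m j : ℚ) - (aperyW S m ((i + j) % m) : ℚ)) / (m : ℚ)

/-- An Arf sequence (x₁, …, xₙ), 0-indexed: xₙ ≥ ⋯ ≥ x₁ ≥ 2, and each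
x_{i+1} is either a sum x_i + ⋯ + x_j for some j ≤ i, or at least x_i + ⋯ + x₁. -/
def ArfSeq (n : ℕ) (x : Fin n → ℕ) : Prop :=
  1 ≤ n ∧ Monotone x ∧ (∀ i, 2 ≤ x i) ∧
  ∀ i : Fin n, ∀ h : i.1 + 1 < n,
    (∃ j : Fin n, j ≤ i ∧ x ⟨i.1 + 1, h⟩ = ∑ k ∈ Finset.Icc j i, x k) ∨
    (∑ k ∈ Finset.Iic i, x k) ≤ x ⟨i.1 + 1, h⟩

/-- The set S(x₁,…,xₙ) = {0} ∪ {xₙ + ⋯ + x_k : 1 ≤ k ≤ n} ∪ {z : z ≥ x₁ + ⋯ + xₙ}. -/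
def arfSet (n : ℕ) (x : Fin n → ℕ) : Set ℕ :=
  {z | z = 0 ∨ (∃ k : Fin n, z = ∑ i ∈ Finset.Ici k, x i) ∨ (∑ i, x i) ≤ z}

/-- The numerical-semigroup-like set generated by A ⊆ ℕ. -/
def genNS (A : Set ℕ) : Set ℕ := (AddSubmonoid.closure A : Set ℕ)

/-!
Applying the Arf property to `w(i) ≥ w(i) ≥ x_i m` shows that `x_i m + 2i` lies in `S`,
hence `w(2i mod m) ≤ x_i m + 2i`. For `i = k` this is `x_{2k} ≤ x_k`; for `i = m - k` one has
`2i = m + (m - 2k)`, which gives `x_{m-2k} ≤ x_{m-k} + 1`.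
-/

namespace IsNumericalSemigroup

variable {S : Set ℕ}

theorem eventually_mem (hS : IsNumericalSemigroup S) : ∀ᶠ n in Filter.atTop, n ∈ S := by
  rw [← Nat.cofinite_eq_atTop]
  exact Filter.mem_cofinite.2 hS.2.2

theorem mul_mem (hS : IsNumericalSemigroup S) {m : ℕ} (hm : m ∈ S) (j : ℕ) : j * m ∈ S := by
  induction j with
  | zero => simpa using hS.1
  | succ j ih => simpa [Nat.succ_mul] using hS.2.1 _ ih _ hm

theorem multiplicityOf_mem (hS : IsNumericalSemigroup S) : multiplicityOf S ∈ S := by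
  obtain ⟨N, hN⟩ := hS.eventually_mem.exists_forall_of_atTop
  exact (Nat.sInf_mem (s := {n | n ∈ S ∧ 0 < n}) ⟨N + 1, hN _ N.le_succ, N.succ_pos⟩).1

theorem aperyW_mem (hS : IsNumericalSemigroup S) {m i : ℕ} (hi : i < m) :
    aperyW S m i ∈ S := by
  obtain ⟨N, hN⟩ := hS.eventually_mem.exists_forall_of_atTop
  refine (Nat.sInf_mem (s := {s | s ∈ S ∧ s % m = i}) ⟨i + m * N, hN _ ?_, ?_⟩).1
  · nlinarith
  · rw [Nat.add_mul_mod_self_left, Nat.mod_eq_of_lt hi]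

end IsNumericalSemigroup

theorem aperyW_le {S : Set ℕ} {m s : ℕ} (hs : s ∈ S) : aperyW S m (s % m) ≤ s :=
  Nat.sInf_le ⟨hs, rfl⟩

theorem HasArfProperty.two_mul_sub_mem {S : Set ℕ} (hA : HasArfProperty S) {s z : ℕ}
    (hs : s ∈ S) (hz : z ∈ S) (hzs : z ≤ s) : 2 * s - z ∈ S := by
  simpa [two_mul] using hA s hs s hs z hz hzs le_rfl

theorem aperyW_two_mul_mod_le {S : Set ℕ} (hS : IsNumericalSemigroup S) (hA : HasArfProperty S)
    {m i q : ℕ} (hmS : m ∈ S) (hi : i < m) (hq : aperyW S m i = q * m + i) :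
    aperyW S m (2 * i % m) ≤ q * m + 2 * i := by
  have hmem : q * m + 2 * i ∈ S := by
    have h := hA.two_mul_sub_mem (hS.aperyW_mem hi) (hS.mul_mem hmS q) (by omega)
    rwa [hq, show 2 * (q * m + i) - q * m = q * m + 2 * i by omega] at h
  simpa [Nat.add_mul_mod_self_right, Nat.add_comm (q * m)] using aperyW_le (m := m) hmem

theorem arf_kunz_double_general (S : Set ℕ) (hS : IsNumericalSemigroup S)
    (hA : HasArfProperty S) (m : ℕ) (hm : m = multiplicityOf S)
    (x : ℕ → ℕ) (hx : ∀ i < m, aperyW S m i = x i * m + i) :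
    ∀ k : ℕ, 0 < k → 2 * k < m →
      x (2 * k) ≤ x k ∧ x (m - 2 * k) ≤ x (m - k) + 1 := by
  intro k hk hkm
  have hmS : m ∈ S := hm ▸ hS.multiplicityOf_mem
  have hm0 : 0 < m := by omega
  constructor
  · have h := aperyW_two_mul_mod_le hS hA hmS (by omega) (hx k (by omega))
    rw [Nat.mod_eq_of_lt hkm, hx _ hkm] at h
    exact Nat.le_of_mul_le_mul_right (by omega) hm0
  · have h := aperyW_two_mul_mod_le hS hA hmS (by omega) (hx (m - k) (by omega))
    rw [show 2 * (m - k) = m - 2 * k + m * 1 by omega, Nat.add_mul_mod_self_left,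
      Nat.mod_eq_of_lt (by omega), hx _ (by omega)] at h
    exact Nat.le_of_mul_le_mul_right (by rw [Nat.add_one_mul (x (m - k))]; omega) hm0

theorem arf_kunz_double (S : Set ℕ) (hS : IsNumericalSemigroup S)
    (hA : HasArfProperty S) (m : ℕ) (hm : m = multiplicityOf S) (hm2 : 2 < m)
    (x : ℕ → ℕ) (hx : ∀ i < m, aperyW S m i = x i * m + i) :
    ∀ k : ℕ, 0 < k → 2 * k < m →
      x (2 * k) ≤ x k ∧ x (m - 2 * k) ≤ x (m - k) + 1 :=
  arf_kunz_double_general S hS hA m hm x hx
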